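/- DPLL is correct: the recursive DPLL procedure (branch on a variable, simplify, recurse on both truth values, report satisfiable iff some branch reaches the empty clause set, unsatisfiable iff every branch derives an empty clause) returns true on a CNF formula F if and only if F is satisfiable. -/

import Mathlib

/-- A literal: a variable index together with a polarity. -/
abbrev Lit (n : ℕ) := Fin n × Bool

/-- A clause: a finite disjunction of literals. -/
abbrev Clause (n : ℕ) := List (Lit n)

/-- A CNF formula: a finite conjunction (list) of clauses. -/
abbrev CNF (n : ℕ) := List (Clause n)

/-- An assignment satisfies a literal. -/
def litSat {n : ℕ} (a : Fin n → Bool) (l : Lit n) : Prop := a l.1 = l.2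

/-- An assignment satisfies a clause if it satisfies some literal of it. -/
def clauseSat {n : ℕ} (a : Fin n → Bool) (c : Clause n) : Prop :=
  ∃ l ∈ c, litSat a l

/-- An assignment satisfies a CNF formula if it satisfies every clause. -/
def cnfSat {n : ℕ} (a : Fin n → Bool) (F : CNF n) : Prop :=
  ∀ c ∈ F, clauseSat a c

/-- A CNF formula is satisfiable if some assignment satisfies it. -/
def Satisfiable {n : ℕ} (F : CNF n) : Prop := ∃ a, cnfSat a F

/-- Simplification of a CNF formula by the assignment `x := b`: remove every
clause containing the literal `(x, b)` (it is satisfied), and delete the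
falsified literal `(x, !b)` from all remaining clauses. -/
def assignSimp {n : ℕ} (F : CNF n) (x : Fin n) (b : Bool) : CNF n :=
  (F.filter (fun c => !c.contains ((x, b) : Lit n))).map
    (fun c => c.filter (fun l => l != ((x, !b) : Lit n)))

/-- The recursive DPLL procedure, with a fuel parameter bounding the recursion
depth (the number of unassigned variables): return `true` if the formula has
no clauses; return `false` if it contains the empty clause; otherwise pick a
variable `x` appearing in the formula and return
`DPLL (F[x := true]) ∨ DPLL (F[x := false])`. -/
def dpll {n : ℕ} : ℕ → CNF n → Bool
  | 0, F => F.isEmpty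
  | fuel + 1, F =>
    if F.isEmpty then true
    else if F.contains ([] : Clause n) then false
    else
      match (F.flatMap id).head? with
      | none => false
      | some l =>
          dpll fuel (assignSimp F l.1 true) || dpll fuel (assignSimp F l.1 false)

/-! Branching is sound and complete: an assignment with `a x = b` satisfies `F[x:=b]` exactly when
it satisfies `F`, and since `x` no longer occurs in `F[x:=b]`, any model of `F[x:=b]` can be reset to
`b` at `x`. So `F` is satisfiable iff one of its two branches is. Each branch strictly decreases the
number of variables occurring in the formula, which is at most `n`, so induction on the fuel,
generalised to any fuel bounding that number, proves the claim; a formula without variables is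
satisfiable iff it has no clauses. -/

def cnfVars {n : ℕ} (F : CNF n) : Finset (Fin n) :=
  ((F.flatMap id).map Prod.fst).toFinset

section
variable {n : ℕ}

lemma mem_cnfVars {F : CNF n} {x : Fin n} : x ∈ cnfVars F ↔ ∃ c ∈ F, ∃ b, (x, b) ∈ c := by
  simp only [cnfVars, List.mem_toFinset, List.mem_map, List.mem_flatMap, id, Prod.exists,
    exists_and_right, exists_eq_right]
  exact ⟨fun ⟨b, c, hc, hb⟩ => ⟨c, hc, b, hb⟩, fun ⟨c, hc, b, hb⟩ => ⟨b, c, hc, hb⟩⟩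

lemma flatMap_eq_nil_of_card_cnfVars_eq_zero {F : CNF n} (h : (cnfVars F).card = 0) :
    F.flatMap id = [] := by
  simpa [cnfVars] using h

lemma mem_assignSimp {F : CNF n} {x : Fin n} {b : Bool} {c : Clause n} :
    c ∈ assignSimp F x b ↔
      ∃ c₀ ∈ F, (x, b) ∉ c₀ ∧ c₀.filter (fun l => l != ((x, !b) : Lit n)) = c := by
  simp [assignSimp, and_assoc]

lemma notMem_cnfVars_assignSimp (F : CNF n) (x : Fin n) (b : Bool) :
    x ∉ cnfVars (assignSimp F x b) := by
  rw [mem_cnfVars]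
  rintro ⟨c, hc, b', hb'⟩
  obtain ⟨c₀, -, hx, rfl⟩ := mem_assignSimp.mp hc
  rw [List.mem_filter] at hb'
  cases b <;> cases b' <;> simp_all

lemma cnfVars_assignSimp_subset (F : CNF n) (x : Fin n) (b : Bool) :
    cnfVars (assignSimp F x b) ⊆ (cnfVars F).erase x := by
  intro y hy
  refine Finset.mem_erase.mpr ⟨fun h => notMem_cnfVars_assignSimp F x b (h ▸ hy), ?_⟩
  obtain ⟨c, hc, b', hb'⟩ := mem_cnfVars.mp hy
  obtain ⟨c₀, hc₀, -, rfl⟩ := mem_assignSimp.mp hc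
  exact mem_cnfVars.mpr ⟨c₀, hc₀, b', (List.mem_filter.mp hb').1⟩

lemma card_cnfVars_assignSimp_lt {F : CNF n} {x : Fin n} (hx : x ∈ cnfVars F) (b : Bool) :
    (cnfVars (assignSimp F x b)).card < (cnfVars F).card :=
  (Finset.card_le_card (cnfVars_assignSimp_subset F x b)).trans_lt (Finset.card_erase_lt_of_mem hx)

lemma cnfSat_assignSimp_iff {a : Fin n → Bool} {F : CNF n} {x : Fin n} {b : Bool}
    (hax : a x = b) : cnfSat a (assignSimp F x b) ↔ cnfSat a F := by
  constructor
  · intro h c hc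
    by_cases hxc : (x, b) ∈ c
    · exact ⟨(x, b), hxc, hax⟩
    · obtain ⟨l, hl, hsat⟩ := h _ (mem_assignSimp.mpr ⟨c, hc, hxc, rfl⟩)
      exact ⟨l, (List.mem_filter.mp hl).1, hsat⟩
  · intro h c hc
    obtain ⟨c₀, hc₀, -, rfl⟩ := mem_assignSimp.mp hc
    obtain ⟨l, hl, hsat⟩ := h c₀ hc₀
    refine ⟨l, List.mem_filter.mpr ⟨hl, bne_iff_ne.mpr ?_⟩, hsat⟩
    rintro rfl
    simp_all [litSat]

lemma cnfSat_update_of_notMem {a : Fin n → Bool} {F : CNF n} {x : Fin n} (b : Bool)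
    (hx : x ∉ cnfVars F) (h : cnfSat a F) : cnfSat (Function.update a x b) F := by
  intro c hc
  obtain ⟨l, hl, hsat⟩ := h c hc
  have hlx : l.1 ≠ x := by
    rintro rfl
    exact hx (mem_cnfVars.mpr ⟨c, hc, l.2, hl⟩)
  exact ⟨l, hl, by simpa [litSat, Function.update_of_ne hlx] using hsat⟩

lemma satisfiable_assignSimp_iff (F : CNF n) (x : Fin n) (b : Bool) :
    Satisfiable (assignSimp F x b) ↔ ∃ a, a x = b ∧ cnfSat a F := by
  constructor
  · rintro ⟨a, ha⟩
    have hax : Function.update a x b x = b := Function.update_self x b a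
    exact ⟨_, hax, (cnfSat_assignSimp_iff hax).mp
      (cnfSat_update_of_notMem b (notMem_cnfVars_assignSimp F x b) ha)⟩
  · rintro ⟨a, hax, ha⟩
    exact ⟨a, (cnfSat_assignSimp_iff hax).mpr ha⟩

lemma satisfiable_iff_assignSimp (F : CNF n) (x : Fin n) :
    Satisfiable F ↔ Satisfiable (assignSimp F x true) ∨ Satisfiable (assignSimp F x false) := by
  rw [satisfiable_assignSimp_iff, satisfiable_assignSimp_iff]
  constructor
  · rintro ⟨a, ha⟩
    cases hax : a x
    exacts [Or.inr ⟨a, hax, ha⟩, Or.inl ⟨a, hax, ha⟩]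
  · rintro (⟨a, -, ha⟩ | ⟨a, -, ha⟩) <;> exact ⟨a, ha⟩

lemma satisfiable_nil : Satisfiable ([] : CNF n) :=
  ⟨fun _ => false, by simp [cnfSat]⟩

lemma not_satisfiable_of_nil_mem {F : CNF n} (h : [] ∈ F) : ¬ Satisfiable F := by
  rintro ⟨a, ha⟩
  simpa [clauseSat] using ha [] h

lemma satisfiable_iff_eq_nil_of_flatMap_eq_nil {F : CNF n} (h : F.flatMap id = []) :
    Satisfiable F ↔ F = [] := by
  refine ⟨fun hF => ?_, fun hF => hF ▸ satisfiable_nil⟩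
  rcases F with _ | ⟨c, F⟩
  · rfl
  · have hc : c = [] := by simp_all
    exact absurd hF (not_satisfiable_of_nil_mem (hc ▸ List.mem_cons_self))

lemma dpll_eq_true_iff_of_card_cnfVars_le :
    ∀ (fuel : ℕ) (F : CNF n), (cnfVars F).card ≤ fuel → (dpll fuel F = true ↔ Satisfiable F)
  | 0, F, hF => by
    rw [dpll, List.isEmpty_iff, satisfiable_iff_eq_nil_of_flatMap_eq_nil
      (flatMap_eq_nil_of_card_cnfVars_eq_zero (Nat.le_zero.mp hF))]
  | fuel + 1, F, hF => by
    rw [dpll]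
    split_ifs with hemp hnil
    · simp [List.isEmpty_iff.mp hemp, satisfiable_nil]
    · exact iff_of_false (by simp) (not_satisfiable_of_nil_mem (List.elem_iff.mp hnil))
    · rcases hhead : (F.flatMap id).head? with _ | l
      · have hflat := List.head?_eq_none_iff.mp hhead
        rw [satisfiable_iff_eq_nil_of_flatMap_eq_nil hflat]
        simpa using hemp
      · have hx : l.1 ∈ cnfVars F := by
          obtain ⟨c, hc, hl⟩ := List.mem_flatMap.mp (List.mem_of_head? hhead)
          exact mem_cnfVars.mpr ⟨c, hc, l.2, hl⟩
        have hrec (b : Bool) := dpll_eq_true_iff_of_card_cnfVars_le fuel (assignSimp F l.1 b)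
          (Nat.lt_succ_iff.mp ((card_cnfVars_assignSimp_lt hx b).trans_le hF))
        rw [Bool.or_eq_true, hrec, hrec, ← satisfiable_iff_assignSimp]
end

/-- DPLL is correct: the recursive DPLL procedure (with fuel
`n`, the number of variables, which bounds the recursion depth) returns `true`
on a CNF formula `F` over `n` variables iff `F` is satisfiable. -/
theorem dpll_correct {n : ℕ} (F : CNF n) :
    dpll n F = true ↔ Satisfiable F :=
  dpll_eq_true_iff_of_card_cnfVars_le n F (card_finset_fin_le _)
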